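/- Let R = ℚ[x₁, x₂, x̄₁, x̄₂] be the polynomial ring in four variables over ℚ and let I = (x₁x₂) be the principal ideal generated by x₁x₂. Then the image of the element x̄₁x₂ + x₁x̄₂ in the quotient ring R/I is a nonzerodivisor: for every h ∈ R, if (x̄₁x₂ + x₁x̄₂)·h ∈ (x₁x₂), then h ∈ (x₁x₂). -/

import Mathlib

open MvPolynomial

private lemma primeX (i : Fin 4) : Prime (X i : MvPolynomial (Fin 4) ℚ) := by
  have hP : Prime ((finSuccEquiv ℚ 3).symm.toMulEquiv Polynomial.X) :=
    (MulEquiv.prime_iff (finSuccEquiv ℚ 3).symm.toMulEquiv).mpr Polynomial.prime_X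
  have h0 : Prime (X 0 : MvPolynomial (Fin 4) ℚ) := by
    have : ((finSuccEquiv ℚ 3).symm Polynomial.X : MvPolynomial (Fin 4) ℚ) = X 0 := by
      rw [← finSuccEquiv_X_zero (R := ℚ) (n := 3), AlgEquiv.symm_apply_apply]
    simpa [this] using hP
  have hQ : Prime ((renameEquiv ℚ (Equiv.swap i 0)).symm.toMulEquiv
      (X 0 : MvPolynomial (Fin 4) ℚ)) :=
    (MulEquiv.prime_iff (renameEquiv ℚ (Equiv.swap i 0)).symm.toMulEquiv).mpr h0
  simpa [renameEquiv_symm, renameEquiv_apply, Equiv.symm_swap, Equiv.swap_apply_right] using hQ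

private lemma notdvdX {i j : Fin 4} (h : i ≠ j) :
    ¬ (X i : MvPolynomial (Fin 4) ℚ) ∣ X j := by
  intro ⟨c, hc⟩
  have := congrArg (eval (fun k => if k = i then (0:ℚ) else 1)) hc
  simp [h.symm] at this

/-- Let `R = ℚ[x₁, x₂, x̄₁, x̄₂]` (with `X 0 = x₁`, `X 1 = x₂`, `X 2 = x̄₁`,
`X 3 = x̄₂`) and `I = (x₁x₂)`. The image of `x̄₁x₂ + x₁x̄₂` in `R/I` is a
nonzerodivisor: for every `h ∈ R`, if `(x̄₁x₂ + x₁x̄₂)·h ∈ (x₁x₂)` then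
`h ∈ (x₁x₂)`. -/
theorem dybar_regular_mod_dy :
    ∀ h : MvPolynomial (Fin 4) ℚ,
      ((X 2 : MvPolynomial (Fin 4) ℚ) * X 1 + X 0 * X 3) * h ∈
          Ideal.span {(X 0 : MvPolynomial (Fin 4) ℚ) * X 1} →
        h ∈ Ideal.span {(X 0 : MvPolynomial (Fin 4) ℚ) * X 1} := by
  intro h hmem
  rw [Ideal.mem_span_singleton] at hmem ⊢
  have p0 := primeX 0
  have p1 := primeX 1
  -- X 0 divides h
  have h0 : (X 0 : MvPolynomial (Fin 4) ℚ) ∣ h := by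
    have hd : (X 0 : MvPolynomial (Fin 4) ℚ) ∣ X 2 * X 1 * h := by
      have : (X 2 : MvPolynomial (Fin 4) ℚ) * X 1 * h =
          ((X 2 : MvPolynomial (Fin 4) ℚ) * X 1 + X 0 * X 3) * h - X 0 * (X 3 * h) := by
        ring
      rw [this]
      exact dvd_sub ((dvd_mul_right _ _).trans hmem) (dvd_mul_right _ _)
    rcases p0.2.2 _ _ hd with hd' | hd'
    · rcases p0.2.2 _ _ hd' with h2 | h2
      · exact absurd h2 (notdvdX (by decide))
      · exact absurd h2 (notdvdX (by decide))
    · exact hd'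
  have h1 : (X 1 : MvPolynomial (Fin 4) ℚ) ∣ h := by
    have hd : (X 1 : MvPolynomial (Fin 4) ℚ) ∣ X 0 * X 3 * h := by
      have : (X 0 : MvPolynomial (Fin 4) ℚ) * X 3 * h =
          ((X 2 : MvPolynomial (Fin 4) ℚ) * X 1 + X 0 * X 3) * h - X 1 * (X 2 * h) := by
        ring
      rw [this]
      exact dvd_sub ((dvd_mul_left _ _).trans hmem) (dvd_mul_right _ _)
    rcases p1.2.2 _ _ hd with hd' | hd'
    · rcases p1.2.2 _ _ hd' with h2 | h2
      · exact absurd h2 (notdvdX (by decide))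
      · exact absurd h2 (notdvdX (by decide))
    · exact hd'
  obtain ⟨b, hb⟩ := h1
  have : (X 0 : MvPolynomial (Fin 4) ℚ) ∣ b := by
    rcases p0.2.2 _ _ (hb ▸ h0) with h' | h'
    · exact absurd h' (notdvdX (by decide))
    · exact h'
  obtain ⟨c, hc⟩ := this
  exact ⟨c, by rw [hb, hc]; ring⟩
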